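/- Let n be a positive integer, x = (x_1,...,x_n) and y = (y_1,...,y_n) be n-tuples of complex numbers, p = (p_1,...,p_n) nonnegative real weights with ∑_{i=1}^n p_i = 1, and γ, Γ ∈ ℂ with Γ ≠ γ and Γ ≠ -γ. If ∑_{i=1}^n p_i | x_i - ((γ + Γ)/2) · conj(y_i) |^2 ≤ (1/4) |Γ - γ|^2 ∑_{i=1}^n p_i |y_i|^2, then 0 ≤ ( (∑_{i=1}^n p_i |x_i|^2)(∑_{i=1}^n p_i |y_i|^2) )^{1/2} - | ∑_{i=1}^n p_i x_i y_i | ≤ ( (∑_{i=1}^n p_i |x_i|^2)(∑_{i=1}^n p_i |y_i|^2) )^{1/2} - ∑_{i=1}^n p_i Re[ ((conj(Γ) + conj(γ))/|Γ + γ|) x_i y_i ] ≤ (1/4) · (|Γ - γ|^2/|Γ + γ|) · ∑_{i=1}^n p_i |y_i|^2. -/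

import Mathlib

/-!
With `c = (γ + Γ) / 2`, `A = ∑ pᵢ|xᵢ|²`, `B = ∑ pᵢ|yᵢ|²` and `S = ∑ pᵢxᵢyᵢ`, expanding the
square turns the hypothesis into `A + |c|²B - 2 Re(c̄ S) ≤ ¼|Γ - γ|²B`. By AM-GM,
`2|c|√(AB) ≤ A + |c|²B`, so `2|c| (√(AB) - Re(c̄ S / |c|)) ≤ ¼|Γ - γ|²B`, and `2|c| = |Γ + γ|`.
The first two inequalities are weighted Cauchy-Schwarz and `Re(u S) ≤ |S|` for `|u| = 1`.
-/

open Finset ComplexConjugate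

namespace Complex

theorem norm_sub_mul_conj_sq (x y c : ℂ) :
    ‖x - c * conj y‖ ^ 2 = ‖x‖ ^ 2 + ‖c‖ ^ 2 * ‖y‖ ^ 2 - 2 * (conj c * (x * y)).re := by
  have hcross : x * conj (c * conj y) = conj c * (x * y) := by
    rw [map_mul, conj_conj]; ring
  simp only [Complex.sq_norm]
  rw [normSq_sub, hcross, normSq_mul, normSq_conj]

variable {ι : Type*} [Fintype ι] (p : ι → ℝ) (x y : ι → ℂ)

theorem sum_mul_re_mul_mul (u : ℂ) :
    ∑ i, p i * (u * (x i * y i)).re = (u * ∑ i, (p i : ℂ) * x i * y i).re := by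
  rw [mul_sum, re_sum]
  refine sum_congr rfl fun i _ => ?_
  rw [← re_ofReal_mul]
  congr 1
  ring

theorem sum_mul_norm_sub_mul_conj_sq (c : ℂ) :
    ∑ i, p i * ‖x i - c * conj (y i)‖ ^ 2
      = ∑ i, p i * ‖x i‖ ^ 2 + ‖c‖ ^ 2 * ∑ i, p i * ‖y i‖ ^ 2
        - 2 * (conj c * ∑ i, (p i : ℂ) * x i * y i).re := by
  rw [← sum_mul_re_mul_mul, mul_sum, mul_sum, ← sum_add_distrib, ← sum_sub_distrib]
  exact sum_congr rfl fun i _ => by rw [norm_sub_mul_conj_sq]; ring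

theorem norm_sum_mul_mul_le_sqrt {p : ι → ℝ} (hp : ∀ i, 0 ≤ p i) :
    ‖∑ i, (p i : ℂ) * x i * y i‖
      ≤ √((∑ i, p i * ‖x i‖ ^ 2) * ∑ i, p i * ‖y i‖ ^ 2) := by
  have hsqrt : ∀ (i) (z : ℂ), √(p i * ‖z‖ ^ 2) = √(p i) * ‖z‖ := fun i z => by
    rw [Real.sqrt_mul (hp i), Real.sqrt_sq (norm_nonneg z)]
  calc ‖∑ i, (p i : ℂ) * x i * y i‖
      ≤ ∑ i, ‖(p i : ℂ) * x i * y i‖ := norm_sum_le _ _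
    _ = ∑ i, √(p i * ‖x i‖ ^ 2) * √(p i * ‖y i‖ ^ 2) := by
      refine sum_congr rfl fun i _ => ?_
      rw [hsqrt, hsqrt, norm_mul, norm_mul, norm_real, Real.norm_of_nonneg (hp i)]
      linear_combination (-(‖x i‖ * ‖y i‖)) * Real.mul_self_sqrt (hp i)
    _ ≤ √(∑ i, p i * ‖x i‖ ^ 2) * √(∑ i, p i * ‖y i‖ ^ 2) :=
      Real.sum_sqrt_mul_sqrt_le _ (fun i => by have := hp i; positivity)
        (fun i => by have := hp i; positivity)
    _ = _ := (Real.sqrt_mul (sum_nonneg fun i _ => by have := hp i; positivity) _).symm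

theorem norm_conj_div_norm {z : ℂ} (hz : z ≠ 0) : ‖conj z / (‖z‖ : ℂ)‖ = 1 := by
  rw [norm_div, norm_conj, norm_real, norm_norm, div_self (norm_ne_zero_iff.2 hz)]

theorem two_mul_re_conj_half_mul {z : ℂ} (hz : z ≠ 0) (w : ℂ) :
    2 * (conj (z / 2) * w).re = ‖z‖ * (conj z / (‖z‖ : ℂ) * w).re := by
  have hz' : (‖z‖ : ℂ) ≠ 0 := ofReal_ne_zero.2 (norm_ne_zero_iff.2 hz)
  rw [← re_ofReal_mul ‖z‖, ← mul_assoc, mul_div_cancel₀ _ hz', map_div₀, conj_ofNat,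
    div_mul_eq_mul_div, div_ofNat_re]
  ring

end Complex

theorem Real.sqrt_mul_sub_le_div {A B t R K : ℝ} (hA : 0 ≤ A) (hB : 0 ≤ B) (ht : 0 < t)
    (h : A + t ^ 2 / 4 * B - t * R ≤ K) : √(A * B) - R ≤ K / t := by
  have amgm : t * √(A * B) ≤ A + t ^ 2 / 4 * B := by
    have := two_mul_le_add_sq (√A) (t / 2 * √B)
    rw [mul_pow, Real.sq_sqrt hA, Real.sq_sqrt hB] at this
    rw [Real.sqrt_mul hA]
    linarith
  rw [le_div_iff₀ ht]
  linarith

theorem stmt_17_general (n : ℕ) (x y : Fin n → ℂ) (p : Fin n → ℝ)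
    (hp : ∀ k, 0 ≤ p k)
    (γ Γ : ℂ) (hne' : Γ ≠ -γ)
    (h : ∑ i, p i * ‖x i - ((γ + Γ) / 2) * (starRingEnd ℂ) (y i)‖ ^ 2
        ≤ (1 / 4) * ‖Γ - γ‖ ^ 2 * ∑ i, p i * ‖y i‖ ^ 2) :
    0 ≤ ((∑ i, p i * ‖x i‖ ^ 2) * (∑ i, p i * ‖y i‖ ^ 2)) ^ ((1 : ℝ) / 2)
        - ‖∑ i, (p i : ℂ) * x i * y i‖
    ∧ ((∑ i, p i * ‖x i‖ ^ 2) * (∑ i, p i * ‖y i‖ ^ 2)) ^ ((1 : ℝ) / 2)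
        - ‖∑ i, (p i : ℂ) * x i * y i‖
      ≤ ((∑ i, p i * ‖x i‖ ^ 2) * (∑ i, p i * ‖y i‖ ^ 2)) ^ ((1 : ℝ) / 2)
        - ∑ i, p i * ((((starRingEnd ℂ) Γ + (starRingEnd ℂ) γ) / (‖Γ + γ‖ : ℂ))
            * (x i * y i)).re
    ∧ ((∑ i, p i * ‖x i‖ ^ 2) * (∑ i, p i * ‖y i‖ ^ 2)) ^ ((1 : ℝ) / 2)
        - ∑ i, p i * ((((starRingEnd ℂ) Γ + (starRingEnd ℂ) γ) / (‖Γ + γ‖ : ℂ))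
            * (x i * y i)).re
      ≤ (1 / 4) * (‖Γ - γ‖ ^ 2 / ‖Γ + γ‖)
        * ∑ i, p i * ‖y i‖ ^ 2 := by
  have hz : Γ + γ ≠ 0 := fun h0 => hne' (eq_neg_of_add_eq_zero_left h0)
  have ht : 0 < ‖Γ + γ‖ := norm_pos_iff.2 hz
  rw [Complex.sum_mul_norm_sub_mul_conj_sq, add_comm γ, Complex.two_mul_re_conj_half_mul hz,
    norm_div, Complex.norm_two] at h
  rw [← map_add, ← Real.sqrt_eq_rpow, Complex.sum_mul_re_mul_mul]
  set A := ∑ i, p i * ‖x i‖ ^ 2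
  set B := ∑ i, p i * ‖y i‖ ^ 2
  set S : ℂ := ∑ i, (p i : ℂ) * x i * y i
  set u : ℂ := conj (Γ + γ) / (‖Γ + γ‖ : ℂ)
  have hA : 0 ≤ A := sum_nonneg fun i _ => by have := hp i; positivity
  have hB : 0 ≤ B := sum_nonneg fun i _ => by have := hp i; positivity
  have hCS : ‖S‖ ≤ √(A * B) := Complex.norm_sum_mul_mul_le_sqrt x y hp
  have hre : (u * S).re ≤ ‖S‖ := (Complex.re_le_norm _).trans_eq
    (by rw [norm_mul, Complex.norm_conj_div_norm hz, one_mul])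
  refine ⟨sub_nonneg.2 hCS, by linarith, ?_⟩
  calc √(A * B) - (u * S).re ≤ 1 / 4 * ‖Γ - γ‖ ^ 2 * B / ‖Γ + γ‖ :=
        Real.sqrt_mul_sub_le_div hA hB ht (by linarith)
    _ = _ := by ring

theorem stmt_17 (n : ℕ) (hn : 0 < n) (x y : Fin n → ℂ) (p : Fin n → ℝ)
    (hp : ∀ k, 0 ≤ p k) (hp1 : ∑ i, p i = 1)
    (γ Γ : ℂ) (hne : Γ ≠ γ) (hne' : Γ ≠ -γ)
    (h : ∑ i, p i * ‖x i - ((γ + Γ) / 2) * (starRingEnd ℂ) (y i)‖ ^ 2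
        ≤ (1 / 4) * ‖Γ - γ‖ ^ 2 * ∑ i, p i * ‖y i‖ ^ 2) :
    0 ≤ ((∑ i, p i * ‖x i‖ ^ 2) * (∑ i, p i * ‖y i‖ ^ 2)) ^ ((1 : ℝ) / 2)
        - ‖∑ i, (p i : ℂ) * x i * y i‖
    ∧ ((∑ i, p i * ‖x i‖ ^ 2) * (∑ i, p i * ‖y i‖ ^ 2)) ^ ((1 : ℝ) / 2)
        - ‖∑ i, (p i : ℂ) * x i * y i‖
      ≤ ((∑ i, p i * ‖x i‖ ^ 2) * (∑ i, p i * ‖y i‖ ^ 2)) ^ ((1 : ℝ) / 2)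
        - ∑ i, p i * ((((starRingEnd ℂ) Γ + (starRingEnd ℂ) γ) / (‖Γ + γ‖ : ℂ))
            * (x i * y i)).re
    ∧ ((∑ i, p i * ‖x i‖ ^ 2) * (∑ i, p i * ‖y i‖ ^ 2)) ^ ((1 : ℝ) / 2)
        - ∑ i, p i * ((((starRingEnd ℂ) Γ + (starRingEnd ℂ) γ) / (‖Γ + γ‖ : ℂ))
            * (x i * y i)).re
      ≤ (1 / 4) * (‖Γ - γ‖ ^ 2 / ‖Γ + γ‖)
        * ∑ i, p i * ‖y i‖ ^ 2 :=
  stmt_17_general n x y p hp γ Γ hne' h
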